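/- Let z be a real random variable distributed as a Gaussian N(μ, σ²) with mean μ ∈ ℝ and variance σ² > 0. Then E[erf(z)] = erf(μ / √(1 + 2σ²)). -/

import Mathlib

open MeasureTheory ProbabilityTheory

/-- The Gauss error function `erf(z) = ∫_0^z (2/√π) exp(-t²) dt`. -/
noncomputable def erf (z : ℝ) : ℝ :=
  ∫ t in (0 : ℝ)..z, 2 / Real.sqrt Real.pi * Real.exp (-t ^ 2)

/-!
With `W ∼ N(0, 1/2)`, whose density is `exp(-t²)/√π`, one has `erf x = 2 P(W ≤ x) - 1`.
Hence for `Z ∼ N(μ, σ²)` independent of `W`, `E[erf Z] = 2 P(Z - W ≥ 0) - 1`, and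
`Z - W ∼ N(μ, σ² + 1/2)`, so `P(Z - W ≥ 0) = P(W ≤ μ / √(1 + 2σ²))` after rescaling.
-/

open Set NNReal

theorem MeasureTheory.measureReal_conv_apply {M : Type*} [AddMonoid M] [MeasurableSpace M]
    [MeasurableAdd₂ M] (μ ν : Measure M) [IsFiniteMeasure ν] {s : Set M} (hs : MeasurableSet s) :
    (μ ∗ ν).real s = ∫ x, ν.real ((x + ·) ⁻¹' s) ∂μ := by
  rw [measureReal_def, Measure.conv, Measure.map_apply measurable_add hs,
    Measure.prod_apply (measurable_add hs),
    ← integral_toReal (measurable_measure_prodMk_left (measurable_add hs)).aemeasurable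
      (ae_of_all _ fun _ ↦ measure_lt_top _ _)]
  rfl

theorem integral_measureReal_Iic_eq_conv_map_neg (μ ν : Measure ℝ) [IsFiniteMeasure ν] :
    ∫ x, ν.real (Iic x) ∂μ = (μ ∗ ν.map (-·)).real (Ici 0) := by
  rw [measureReal_conv_apply _ _ measurableSet_Ici]
  congr 1 with x
  rw [map_measureReal_apply measurable_neg (measurableSet_Ici.preimage (measurable_const_add x))]
  congr 1 with w
  simp

theorem monotone_measureReal_Iic (ν : Measure ℝ) [IsFiniteMeasure ν] :
    Monotone fun x ↦ ν.real (Iic x) :=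
  fun _ _ hxy ↦ measureReal_mono (Iic_subset_Iic.2 hxy)

namespace ProbabilityTheory

theorem gaussianReal_real_Iic_zero {v : ℝ≥0} (hv : v ≠ 0) :
    (gaussianReal 0 v).real (Iic 0) = 2⁻¹ := by
  have := nullSingletonClass_gaussianReal (μ := 0) hv
  have hsymm : (gaussianReal 0 v).real (Ici 0) = (gaussianReal 0 v).real (Iic 0) := by
    conv_rhs => rw [← neg_zero, ← gaussianReal_map_neg (μ := 0)]
    rw [map_measureReal_apply measurable_neg measurableSet_Iic]
    simp
  have hsum :=
    measureReal_add_measureReal_compl (μ := gaussianReal 0 v) (measurableSet_Iic (a := 0))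
  rw [compl_Iic, measureReal_congr Ioi_ae_eq_Ici, hsymm, probReal_univ] at hsum
  linarith

theorem gaussianReal_real_Iic_eq_integral (m : ℝ) {v : ℝ≥0} (hv : v ≠ 0) (x : ℝ) :
    (gaussianReal m v).real (Iic x) = ∫ t in Iic x, gaussianPDFReal m v t := by
  rw [measureReal_def, gaussianReal_apply_eq_integral _ hv, ENNReal.toReal_ofReal
    (setIntegral_nonneg measurableSet_Iic fun t _ ↦ gaussianPDFReal_nonneg _ _ t)]

theorem gaussianReal_real_Ici_zero_eq_Iic (m : ℝ) {c : ℝ} (hc : 0 < c) {v w : ℝ≥0}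
    (hvw : (v : ℝ) = c ^ 2 * w) :
    (gaussianReal m v).real (Ici 0) = (gaussianReal 0 w).real (Iic (m / c)) := by
  have hv : v = .mk (c ^ 2) (sq_nonneg c) * w := NNReal.eq hvw
  have hmap : (gaussianReal 0 w).map ((m - ·) ∘ (c * ·)) = gaussianReal m v := by
    rw [← Measure.map_map (by fun_prop) (by fun_prop), gaussianReal_map_const_mul,
      gaussianReal_map_const_sub, mul_zero, sub_zero, hv]
  rw [← hmap, map_measureReal_apply (by fun_prop) measurableSet_Ici]
  congr 1 with x
  simp [le_div_iff₀' hc]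

theorem gaussianPDFReal_zero_inv_two (t : ℝ) :
    gaussianPDFReal 0 2⁻¹ t = (√Real.pi)⁻¹ * Real.exp (-t ^ 2) := by
  rw [gaussianPDFReal, NNReal.coe_inv, NNReal.coe_ofNat, sub_zero,
    mul_right_comm, mul_inv_cancel₀ two_ne_zero, one_mul, div_one]

end ProbabilityTheory

theorem erf_eq_two_mul_gaussianReal_real_Iic_sub_one (x : ℝ) :
    erf x = 2 * (gaussianReal 0 2⁻¹).real (Iic x) - 1 := by
  have hv : (2⁻¹ : ℝ≥0) ≠ 0 := by norm_num
  have hint := integrable_gaussianPDFReal 0 2⁻¹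
  have h := intervalIntegral.integral_Iic_sub_Iic (a := 0) (b := x) hint.integrableOn
    hint.integrableOn
  simp_rw [← gaussianReal_real_Iic_eq_integral _ hv, gaussianReal_real_Iic_zero hv,
    gaussianPDFReal_zero_inv_two] at h
  calc erf x = 2 * ∫ t in 0..x, (√Real.pi)⁻¹ * Real.exp (-t ^ 2) := by
        rw [erf, ← intervalIntegral.integral_const_mul]
        simp_rw [div_eq_mul_inv, mul_assoc]
    _ = 2 * (gaussianReal 0 2⁻¹).real (Iic x) - 1 := by rw [← h]; ring

theorem integral_erf_gaussianReal (μ : ℝ) (v : ℝ≥0) :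
    ∫ z, erf z ∂(gaussianReal μ v) = erf (μ / √(1 + 2 * v)) := by
  set ν := gaussianReal 0 2⁻¹
  have hint : Integrable (fun z ↦ ν.real (Iic z)) (gaussianReal μ v) :=
    .of_bound (monotone_measureReal_Iic ν).measurable.aestronglyMeasurable 1
      (ae_of_all _ fun _ ↦ by simp [abs_of_nonneg])
  calc ∫ z, erf z ∂(gaussianReal μ v)
      = 2 * ∫ z, ν.real (Iic z) ∂(gaussianReal μ v) - 1 := by
        simp_rw [erf_eq_two_mul_gaussianReal_real_Iic_sub_one]
        rw [integral_sub (hint.const_mul 2) (integrable_const 1), integral_const_mul]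
        simp
    _ = 2 * (gaussianReal μ (v + 2⁻¹)).real (Ici 0) - 1 := by
        rw [integral_measureReal_Iic_eq_conv_map_neg, gaussianReal_map_neg, neg_zero,
          gaussianReal_conv_gaussianReal, add_zero]
    _ = erf (μ / √(1 + 2 * v)) := by
        have hvar : ((v + 2⁻¹ : ℝ≥0) : ℝ) = √(1 + 2 * v) ^ 2 * (2⁻¹ : ℝ≥0) := by
          rw [Real.sq_sqrt (by positivity)]
          push_cast
          ring
        rw [gaussianReal_real_Ici_zero_eq_Iic μ (by positivity) hvar,
          erf_eq_two_mul_gaussianReal_real_Iic_sub_one]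

/-- If `z ∼ N(μ, σ²)` with `σ² > 0`, then `E[erf(z)] = erf(μ / √(1 + 2σ²))`. -/
theorem expectation_erf_gaussian (μ : ℝ) (σ2 : ℝ) (hσ2 : 0 < σ2) :
    ∫ z, erf z ∂(gaussianReal μ ⟨σ2, hσ2.le⟩) =
      erf (μ / Real.sqrt (1 + 2 * σ2)) :=
  integral_erf_gaussianReal μ ⟨σ2, hσ2.le⟩
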